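/- arXiv:2604.06511 — 5 statements merged into one kernel-verified Lean document; each statement's English description precedes it below -/
import Mathlib

section
/- Let g : ℝⁿ → ℝ ∪ {+∞} be a proper, lower semicontinuous, convex function and μ > 0. Then for any x, x⋆ ∈ ℝⁿ there exists a symmetric matrix D = D(x, x⋆) with 0 ⪯ D ⪯ I such that prox_{μg}(x) − prox_{μg}(x⋆) = D(x − x⋆). -/
open scoped RealInnerProductSpace
open Set Filter Topology

/-! The optimality condition of the proximal problem, obtained by moving the minimiser a
small step `t` towards an arbitrary point and letting `t → 0⁺`, is the variational inequality
`g u - g z ≤ ⟪u - v, z - u⟫ / μ`. Adding it for the two proximal points gives firm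
nonexpansiveness `‖P‖² ≤ ⟪p, P⟫`, and then the rank-one operator `D = P Pᵀ / ⟪p, P⟫` does the
job: `D p = P` and `0 ≤ ⟪D u, u⟫ = ⟪P, u⟫² / ⟪p, P⟫ ≤ ‖P‖² ‖u‖² / ⟪p, P⟫ ≤ ‖u‖²`. -/

lemma le_of_forall_mem_Ioc_le_add_mul {a b c : ℝ} (h : ∀ t ∈ Ioc (0 : ℝ) 1, a ≤ b + t * c) :
    a ≤ b := by
  have hlim : Tendsto (fun t : ℝ => b + t * c) (𝓝[>] 0) (𝓝 b) := by
    have hcont : Continuous fun t : ℝ => b + t * c := by fun_prop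
    simpa using (hcont.tendsto 0).mono_left nhdsWithin_le_nhds
  exact ge_of_tendsto hlim (eventually_of_mem (Ioc_mem_nhdsGT_of_mem (by simp)) h)

section Prox

variable {E : Type*} [NormedAddCommGroup E] [InnerProductSpace ℝ E] {g : E → ℝ} {μ : ℝ}

lemma norm_add_smul_sub_sq (u v z : E) (t : ℝ) :
    ‖u + t • (z - u) - v‖ ^ 2 = ‖u - v‖ ^ 2 + 2 * (t * ⟪u - v, z - u⟫) + t ^ 2 * ‖z - u‖ ^ 2 := by
  rw [show u + t • (z - u) - v = (u - v) + t • (z - u) by abel, norm_add_sq_real,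
    real_inner_smul_right, norm_smul, mul_pow, Real.norm_eq_abs, sq_abs]

lemma ConvexOn.sub_le_inner_of_isMinOn (hg : ConvexOn ℝ univ g) {u v : E}
    (hu : IsMinOn (fun z => g z + (1 / (2 * μ)) * ‖z - v‖ ^ 2) univ u) (z : E) :
    g u - g z ≤ (1 / μ) * ⟪u - v, z - u⟫ := by
  refine le_of_forall_mem_Ioc_le_add_mul (c := (1 / (2 * μ)) * ‖z - u‖ ^ 2) fun t ⟨ht0, ht1⟩ => ?_
  have hmin : g u + (1 / (2 * μ)) * ‖u - v‖ ^ 2 ≤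
      g (u + t • (z - u)) + (1 / (2 * μ)) * ‖u + t • (z - u) - v‖ ^ 2 := hu (mem_univ _)
  have hconv : g (u + t • (z - u)) ≤ (1 - t) * g u + t * g z := by
    rw [show u + t • (z - u) = (1 - t) • u + t • z by module]
    exact hg.2 (mem_univ u) (mem_univ z) (by linarith) ht0.le (by ring)
  rw [norm_add_smul_sub_sq] at hmin
  have hscaled : t * (g u - g z) ≤
      t * ((1 / μ) * ⟪u - v, z - u⟫ + t * ((1 / (2 * μ)) * ‖z - u‖ ^ 2)) := by
    have : (1 / μ) = 2 * (1 / (2 * μ)) := by field_simp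
    rw [this]
    nlinarith
  exact le_of_mul_le_mul_left hscaled ht0

lemma ConvexOn.norm_sub_sq_le_inner_of_isMinOn (hμ : 0 < μ) (hg : ConvexOn ℝ univ g)
    {u v u' v' : E} (hu : IsMinOn (fun z => g z + (1 / (2 * μ)) * ‖z - v‖ ^ 2) univ u)
    (hu' : IsMinOn (fun z => g z + (1 / (2 * μ)) * ‖z - v'‖ ^ 2) univ u') :
    ‖u - u'‖ ^ 2 ≤ ⟪v - v', u - u'⟫ := by
  have h := add_le_add (hg.sub_le_inner_of_isMinOn hu u') (hg.sub_le_inner_of_isMinOn hu' u)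
  rw [← mul_add] at h
  have hsum : ⟪u - v, u' - u⟫ + ⟪u' - v', u - u'⟫ = ⟪v - v', u - u'⟫ - ‖u - u'‖ ^ 2 := by
    rw [← real_inner_self_eq_norm_sq, ← neg_sub u u', inner_neg_right, ← inner_neg_left,
      ← inner_add_left, ← inner_sub_left]
    congr 1
    abel
  rw [hsum] at h
  nlinarith [one_div_pos.mpr hμ]

end Prox

/-- The witness is `P Pᵀ / ⟪p, P⟫`; when `⟪p, P⟫ = 0` the hypothesis forces `P = 0`, and
`0⁻¹ = 0` makes the witness the zero map. -/
lemma exists_isSymmetric_le_id_apply_eq {E : Type*} [NormedAddCommGroup E]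
    [InnerProductSpace ℝ E] {p P : E} (h : ‖P‖ ^ 2 ≤ ⟪p, P⟫) :
    ∃ D : E →ₗ[ℝ] E, (∀ u w, ⟪D u, w⟫ = ⟪u, D w⟫) ∧ (∀ u, 0 ≤ ⟪D u, u⟫) ∧
      (∀ u, ⟪D u, u⟫ ≤ ‖u‖ ^ 2) ∧ D p = P := by
  set c := ⟪p, P⟫
  have hc : 0 ≤ c := (sq_nonneg _).trans h
  have hD : ∀ u, ⟪(c⁻¹ • (InnerProductSpace.rankOne ℝ P P).toLinearMap) u, u⟫ =
      c⁻¹ * ⟪P, u⟫ ^ 2 := by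
    intro u
    simp only [LinearMap.smul_apply, ContinuousLinearMap.coe_coe,
      InnerProductSpace.rankOne_apply, real_inner_smul_left, real_inner_comm u P]
    ring
  refine ⟨c⁻¹ • (InnerProductSpace.rankOne ℝ P P).toLinearMap, fun u w => ?_, fun u => ?_,
    fun u => ?_, ?_⟩
  · simp only [LinearMap.smul_apply, ContinuousLinearMap.coe_coe,
      InnerProductSpace.rankOne_apply, real_inner_smul_left, real_inner_smul_right,
      real_inner_comm u P]
    ring
  · rw [hD]
    positivity
  · rw [hD]
    rcases hc.eq_or_lt with hc0 | hcpos
    · simp [← hc0]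
    · rw [inv_mul_le_iff₀ hcpos]
      calc ⟪P, u⟫ ^ 2 ≤ (‖P‖ * ‖u‖) ^ 2 := by
            simpa [sq_abs] using pow_le_pow_left₀ (abs_nonneg _) (abs_real_inner_le_norm P u) 2
        _ = ‖P‖ ^ 2 * ‖u‖ ^ 2 := mul_pow _ _ _
        _ ≤ c * ‖u‖ ^ 2 := by gcongr
  · rcases hc.eq_or_lt with hc0 | hcpos
    · have : P = 0 := by simpa [← hc0] using h
      simp [this]
    · simp only [LinearMap.smul_apply, ContinuousLinearMap.coe_coe,
        InnerProductSpace.rankOne_apply, real_inner_comm p P]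
      rw [smul_smul, inv_mul_cancel₀ hcpos.ne', one_smul]

theorem stmt7_general {n : ℕ} (g : EuclideanSpace ℝ (Fin n) → ℝ) (μ : ℝ) (hμ : 0 < μ)
    (hg_conv : ConvexOn ℝ Set.univ g)
    (prox : EuclideanSpace ℝ (Fin n) → EuclideanSpace ℝ (Fin n))
    (hprox : ∀ v, IsMinOn (fun z => g z + (1 / (2 * μ)) * ‖z - v‖ ^ 2) Set.univ (prox v))
    (x xs : EuclideanSpace ℝ (Fin n)) :
    ∃ D : EuclideanSpace ℝ (Fin n) →ₗ[ℝ] EuclideanSpace ℝ (Fin n),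
      (∀ u w, ⟪D u, w⟫ = ⟪u, D w⟫) ∧
      (∀ u, 0 ≤ ⟪D u, u⟫) ∧
      (∀ u, ⟪D u, u⟫ ≤ ‖u‖ ^ 2) ∧
      D (x - xs) = prox x - prox xs :=
  exists_isSymmetric_le_id_apply_eq
    (hg_conv.norm_sub_sq_le_inner_of_isMinOn hμ (hprox x) (hprox xs))

/-- The difference of proximal points is represented by a symmetric operator `D`
with `0 ⪯ D ⪯ I`. -/
theorem stmt7 {n : ℕ} (g : EuclideanSpace ℝ (Fin n) → ℝ) (μ : ℝ) (hμ : 0 < μ)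
    (hg_conv : ConvexOn ℝ Set.univ g) (hg_lsc : LowerSemicontinuous g)
    (prox : EuclideanSpace ℝ (Fin n) → EuclideanSpace ℝ (Fin n))
    (hprox : ∀ v, IsMinOn (fun z => g z + (1 / (2 * μ)) * ‖z - v‖ ^ 2) Set.univ (prox v))
    (x xs : EuclideanSpace ℝ (Fin n)) :
    ∃ D : EuclideanSpace ℝ (Fin n) →ₗ[ℝ] EuclideanSpace ℝ (Fin n),
      (∀ u w, ⟪D u, w⟫ = ⟪u, D w⟫) ∧
      (∀ u, 0 ≤ ⟪D u, u⟫) ∧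
      (∀ u, ⟪D u, u⟫ ≤ ‖u‖ ^ 2) ∧
      D (x - xs) = prox x - prox xs :=
  stmt7_general g μ hμ hg_conv prox hprox x xs
end

section
/- Let P = prox_{μg}(x) − prox_{μg}(x⋆) ≠ 0 and p = x − x⋆, where prox_{μg} is firmly nonexpansive, and define D = PPᵀ/(Pᵀp). Then D is symmetric, D ⪰ 0, D ⪬ I (i.e., I − D ⪰ 0), and D p = P. -/
/-!
`D` is a nonnegative multiple of `PPᵀ`, and its quadratic form is `(Pᵀx)² / (Pᵀp)`. By
Cauchy–Schwarz this is at most `(PᵀP / Pᵀp) ‖x‖²`, and firm nonexpansiveness says exactly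
that `PᵀP / Pᵀp ≤ 1`.
-/

open Matrix

variable {ι : Type*} [Fintype ι]

lemma dotProduct_self_nonneg (v : ι → ℝ) : 0 ≤ v ⬝ᵥ v :=
  dotProduct_star_self_nonneg v

lemma dotProduct_sq_le_mul_dotProduct_self (v x : ι → ℝ) :
    (v ⬝ᵥ x) ^ 2 ≤ (v ⬝ᵥ v) * (x ⬝ᵥ x) := by
  simpa [dotProduct, pow_two] using Finset.sum_mul_sq_le_sq_mul_sq Finset.univ v x

lemma smul_vecMulVec_self_mulVec (c : ℝ) (v x : ι → ℝ) :
    (c • vecMulVec v v) *ᵥ x = (c * (v ⬝ᵥ x)) • v := by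
  rw [smul_mulVec, vecMulVec_mulVec, op_smul_eq_smul, smul_smul]

lemma dotProduct_smul_vecMulVec_self_mulVec (c : ℝ) (v x : ι → ℝ) :
    x ⬝ᵥ ((c • vecMulVec v v) *ᵥ x) = c * (v ⬝ᵥ x) ^ 2 := by
  rw [smul_vecMulVec_self_mulVec, dotProduct_smul, dotProduct_comm, smul_eq_mul]
  ring

lemma posSemidef_smul_vecMulVec_self {c : ℝ} (hc : 0 ≤ c) (v : ι → ℝ) :
    (c • vecMulVec v v).PosSemidef :=
  (posSemidef_vecMulVec_self_star v).smul hc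

lemma posSemidef_one_sub_smul_vecMulVec_self [DecidableEq ι] {c : ℝ} (hc : 0 ≤ c)
    {v : ι → ℝ} (hcv : c * (v ⬝ᵥ v) ≤ 1) : (1 - c • vecMulVec v v).PosSemidef := by
  refine posSemidef_iff_dotProduct_mulVec.mpr
    ⟨isHermitian_one.sub (posSemidef_smul_vecMulVec_self hc v).isHermitian, fun x => ?_⟩
  rw [star_trivial, sub_mulVec, one_mulVec, dotProduct_sub,
    dotProduct_smul_vecMulVec_self_mulVec, sub_nonneg]
  calc c * (v ⬝ᵥ x) ^ 2
      ≤ c * ((v ⬝ᵥ v) * (x ⬝ᵥ x)) :=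
        mul_le_mul_of_nonneg_left (dotProduct_sq_le_mul_dotProduct_self v x) hc
    _ = (c * (v ⬝ᵥ v)) * (x ⬝ᵥ x) := by ring
    _ ≤ x ⬝ᵥ x := mul_le_of_le_one_left (dotProduct_self_nonneg x) hcv

lemma inv_dotProduct_smul_vecMulVec_mulVec {P p : ι → ℝ} (hPp : P ⬝ᵥ P ≤ P ⬝ᵥ p) :
    ((P ⬝ᵥ p)⁻¹ • vecMulVec P P) *ᵥ p = P := by
  rw [smul_vecMulVec_self_mulVec]
  by_cases h : P ⬝ᵥ p = 0
  -- the junk value `0⁻¹ = 0` is harmless: `P ⬝ᵥ p = 0` forces `P = 0`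
  · have hP : P = 0 :=
      dotProduct_self_eq_zero.mp (le_antisymm (h ▸ hPp) (dotProduct_self_nonneg P))
    simp [hP]
  · rw [inv_mul_cancel₀ h, one_smul]

theorem stmt8_general {n : ℕ} (P p : Fin n → ℝ)
    (hfirm : P ⬝ᵥ P ≤ P ⬝ᵥ p) :
    (((P ⬝ᵥ p)⁻¹ • Matrix.vecMulVec P P : Matrix (Fin n) (Fin n) ℝ)).IsSymm ∧
    ((P ⬝ᵥ p)⁻¹ • Matrix.vecMulVec P P : Matrix (Fin n) (Fin n) ℝ).PosSemidef ∧
    ((1 : Matrix (Fin n) (Fin n) ℝ) - (P ⬝ᵥ p)⁻¹ • Matrix.vecMulVec P P).PosSemidef ∧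
    ((P ⬝ᵥ p)⁻¹ • Matrix.vecMulVec P P : Matrix (Fin n) (Fin n) ℝ).mulVec p = P := by
  have hPp : 0 ≤ P ⬝ᵥ p := (dotProduct_self_nonneg P).trans hfirm
  have hD := posSemidef_smul_vecMulVec_self (inv_nonneg.mpr hPp) P
  exact ⟨isHermitian_iff_isSymm.mp hD.isHermitian, hD,
    posSemidef_one_sub_smul_vecMulVec_self (inv_nonneg.mpr hPp) (inv_mul_le_one_of_le₀ hfirm hPp),
    inv_dotProduct_smul_vecMulVec_mulVec hfirm⟩

/-- Properties of the rank-one matrix `D = PPᵀ/(Pᵀp)` built from a firmly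
nonexpansive displacement. -/
theorem stmt8 {n : ℕ} (P p : Fin n → ℝ) (hP : P ≠ 0)
    (hfirm : P ⬝ᵥ P ≤ P ⬝ᵥ p) :
    (((P ⬝ᵥ p)⁻¹ • Matrix.vecMulVec P P : Matrix (Fin n) (Fin n) ℝ)).IsSymm ∧
    ((P ⬝ᵥ p)⁻¹ • Matrix.vecMulVec P P : Matrix (Fin n) (Fin n) ℝ).PosSemidef ∧
    ((1 : Matrix (Fin n) (Fin n) ℝ) - (P ⬝ᵥ p)⁻¹ • Matrix.vecMulVec P P).PosSemidef ∧
    ((P ⬝ᵥ p)⁻¹ • Matrix.vecMulVec P P : Matrix (Fin n) (Fin n) ℝ).mulVec p = P :=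
  stmt8_general P p hfirm
end

section
/- Let B be a real symmetric n×n matrix with m_f·I ⪯ B ⪯ L_f·I (0 < m_f ≤ L_f), let D be a diagonal matrix with entries 0 ≤ D_ii ≤ 1, let μ ≤ 1/L_f, and define Z = (1/μ)(I − D) + D B. Then Z + Zᵀ ⪰ (3/2) B. -/
/-!
Write `E = 1 - D` and `C = 2D - 1`. Expanding gives
`Z + Zᵀ - (3/2) B = (1/2) C B C + 2 E (L - B) E + 2L (E - E²) + 2 (1/μ - L) E`,
and every summand is positive semidefinite: the first two are congruences of `B ⪰ 0` and
`L - B ⪰ 0`, the last two are diagonal with nonnegative entries because `0 ≤ d i ≤ 1` and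
`L ≤ 1/μ`.
-/

open Matrix

theorem Matrix.add_transpose_sub_eq_sum_of_isSymm {ι K : Type*} [Fintype ι] [DecidableEq ι]
    [Field K] [NeZero (2 : K)] {B D : Matrix ι ι K} (hB : B.IsSymm) (hD : D.IsSymm) (a L : K) :
    a • (1 - D) + D * B + (a • (1 - D) + D * B)ᵀ - (3 / 2 : K) • B
      = (1 / 2 : K) • (((2 : K) • D - 1) * B * ((2 : K) • D - 1))
        + (2 : K) • ((1 - D) * (L • 1 - B) * (1 - D))
        + (2 * L) • ((1 - D) - (1 - D) * (1 - D)) + (2 * (a - L)) • (1 - D) := by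
  rw [transpose_add, transpose_smul, transpose_sub, transpose_one, transpose_mul, hB.eq, hD.eq]
  simp only [Matrix.mul_sub, Matrix.sub_mul, Matrix.mul_one, Matrix.one_mul, Matrix.smul_mul,
    Matrix.mul_smul, mul_assoc]
  match_scalars <;> field_simp <;> ring

theorem Matrix.PosSemidef.mul_mul_self_of_isHermitian {ι : Type*} [Fintype ι]
    {A C : Matrix ι ι ℝ} (hA : A.PosSemidef) (hC : C.IsHermitian) : (C * A * C).PosSemidef := by
  simpa only [hC.eq] using hA.conjTranspose_mul_mul_same C

variable {ι : Type*} [Fintype ι] [DecidableEq ι]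

theorem Matrix.posSemidef_sub_mul_self_diagonal {e : ι → ℝ} (he : ∀ i, 0 ≤ e i ∧ e i ≤ 1) :
    (diagonal e - diagonal e * diagonal e).PosSemidef := by
  rw [diagonal_mul_diagonal, diagonal_sub, posSemidef_diagonal_iff]
  exact fun i => by nlinarith [he i]

theorem Matrix.posSemidef_add_transpose_sub_of_le {B : Matrix ι ι ℝ} {d : ι → ℝ} {a L : ℝ}
    (hB : B.PosSemidef) (hBL : (L • 1 - B).PosSemidef) (hd : ∀ i, 0 ≤ d i ∧ d i ≤ 1)
    (hL : 0 ≤ L) (hLa : L ≤ a) :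
    (a • (1 - diagonal d) + diagonal d * B + (a • (1 - diagonal d) + diagonal d * B)ᵀ
      - (3 / 2 : ℝ) • B).PosSemidef := by
  have hE : 1 - diagonal d = diagonal (1 - d) := by rw [← diagonal_one, diagonal_sub]; rfl
  have hE_psd : (1 - diagonal d).PosSemidef := by
    rw [hE, posSemidef_diagonal_iff]
    exact fun i => sub_nonneg.mpr (hd i).2
  have hEE_psd : ((1 - diagonal d) - (1 - diagonal d) * (1 - diagonal d)).PosSemidef := by
    rw [hE]
    exact posSemidef_sub_mul_self_diagonal fun i => by simp [hd i]
  rw [add_transpose_sub_eq_sum_of_isSymm (isHermitian_iff_isSymm.mp hB.isHermitian)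
    (isSymm_diagonal d) a L]
  have hC : ((2 : ℝ) • diagonal d - 1).IsHermitian :=
    ((isHermitian_diagonal d).smul (.all 2)).sub isHermitian_one
  have hE_herm : (1 - diagonal d).IsHermitian := isHermitian_one.sub (isHermitian_diagonal d)
  refine .add (.add (.add ?_ ?_) (hEE_psd.smul (by positivity))) (hE_psd.smul (by linarith))
  · exact (hB.mul_mul_self_of_isHermitian hC).smul (by norm_num)
  · exact (hBL.mul_mul_self_of_isHermitian hE_herm).smul (by norm_num)

theorem stmt9_general {n : ℕ} (B D : Matrix (Fin n) (Fin n) ℝ) (mf Lf μ : ℝ)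
    (hmf : 0 < mf)
    (hBm : (B - mf • (1 : Matrix (Fin n) (Fin n) ℝ)).PosSemidef)
    (hBL : (Lf • (1 : Matrix (Fin n) (Fin n) ℝ) - B).PosSemidef)
    (d : Fin n → ℝ) (hD : D = Matrix.diagonal d) (hd : ∀ i, 0 ≤ d i ∧ d i ≤ 1)
    (hμ : 0 < μ) (hμL : μ ≤ 1 / Lf) :
    ((1 / μ) • ((1 : Matrix (Fin n) (Fin n) ℝ) - D) + D * B
      + ((1 / μ) • ((1 : Matrix (Fin n) (Fin n) ℝ) - D) + D * B)ᵀ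
      - (3 / 2 : ℝ) • B).PosSemidef := by
  have hLf : 0 < Lf := one_div_pos.mp (hμ.trans_le hμL)
  have hLμ : Lf ≤ 1 / μ := (le_one_div hμ hLf).mp hμL
  have hB : B.PosSemidef := by simpa using hBm.add (PosSemidef.one.smul hmf.le)
  subst hD
  exact posSemidef_add_transpose_sub_of_le hB hBL hd hLf.le hLμ

/-- Lower bound `Z + Zᵀ ⪰ (3/2)B` for `Z = (1/μ)(I - D) + DB`. -/
theorem stmt9 {n : ℕ} (B D : Matrix (Fin n) (Fin n) ℝ) (mf Lf μ : ℝ)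
    (hmf : 0 < mf) (hmL : mf ≤ Lf)
    (hBsymm : B.IsSymm)
    (hBm : (B - mf • (1 : Matrix (Fin n) (Fin n) ℝ)).PosSemidef)
    (hBL : (Lf • (1 : Matrix (Fin n) (Fin n) ℝ) - B).PosSemidef)
    (d : Fin n → ℝ) (hD : D = Matrix.diagonal d) (hd : ∀ i, 0 ≤ d i ∧ d i ≤ 1)
    (hμ : 0 < μ) (hμL : μ ≤ 1 / Lf) :
    ((1 / μ) • ((1 : Matrix (Fin n) (Fin n) ℝ) - D) + D * B
      + ((1 / μ) • ((1 : Matrix (Fin n) (Fin n) ℝ) - D) + D * B)ᵀ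
      - (3 / 2 : ℝ) • B).PosSemidef :=
  stmt9_general B D mf Lf μ hmf hBm hBL d hD hd hμ hμL
end

section
/- Let f : ℝⁿ → ℝ be m_f-strongly convex with L_f-Lipschitz gradient, g proper lsc convex, μ > 0, and consider the dynamics ẋ = −∇f(x) − ∇M_{μg}(x+μα), α̇ = k₁∇f(x) + k₂α + k₃∇M_{μg}(x+μα) with k₁, k₃ > 0 and k₂ < k₂^crit := −k₃ − (k₁²μ/(2k₃))·(L_f²/m_f). Then any equilibrium (x⋆, α⋆) is globally exponentially stable: there exists c > 0 such that ‖(x(t),α(t)) − (x⋆,α⋆)‖² ≤ c·e^{−rt/2} with r = min(m_f, −2(k₂ − k₂^crit)) > 0. -/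
/-!
Since `g` is convex, `prox` is firmly nonexpansive, so the Moreau-envelope gradient
`G v = (1 / μ) • (v - prox v)` is `μ`-cocoercive: `μ ‖G v - G w‖² ≤ ⟪G v - G w, v - w⟫`.
Along a trajectory, `V = k₃ ‖x - x⋆‖² + μ ‖α - α⋆‖²` (the paper's `P = diag((k₃/μ) I, I)`,
scaled by `μ`) then satisfies `V' ≤ -r V`: strong convexity and cocoercivity make the diagonal
terms negative, and the cross term `⟪α - α⋆, ∇f(x) - ∇f(x⋆)⟫` is absorbed by Young's inequality
with weight `k₃ m_f`, which is where `k₂^crit` comes from. Grönwall gives `V(t) ≤ V(0) e^{-rt}`.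
-/

open scoped RealInnerProductSpace

open Filter Topology Set Real

theorem Real.coe_toNNReal_sq_le (x : ℝ) : (x.toNNReal : ℝ) ^ 2 ≤ x ^ 2 := by
  rw [Real.coe_toNNReal', ← sq_abs x]
  gcongr
  exact max_le (le_abs_self x) (abs_nonneg x)

theorem le_mul_exp_of_hasDerivAt_le_mul {V V' : ℝ → ℝ} {K : ℝ}
    (hV : ∀ t, HasDerivAt V (V' t) t) (hle : ∀ t, V' t ≤ K * V t) {t : ℝ} (ht : 0 ≤ t) :
    V t ≤ V 0 * exp (K * t) := by
  have hcont : Continuous V := continuous_iff_continuousAt.mpr fun t => (hV t).continuousAt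
  simpa [gronwallBound_ε0] using
    le_gronwallBound_of_liminf_deriv_right_le (K := K) (ε := 0) hcont.continuousOn
      (fun s _ r hr => (hV s).hasDerivWithinAt.liminf_right_slope_le hr) le_rfl
      (fun s _ => by simpa using hle s) t ⟨ht, le_rfl⟩

section InnerProductSpace

variable {E : Type*} [NormedAddCommGroup E] [InnerProductSpace ℝ E]

theorem ConvexOn.optimality_of_isMinOn_add_mul_norm_sq {g : E → ℝ} (hg : ConvexOn ℝ univ g)
    {c : ℝ} {v p : E} (hp : IsMinOn (fun z => g z + c * ‖z - v‖ ^ 2) univ p) (q : E) :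
    0 ≤ g q - g p + 2 * c * ⟪p - v, q - p⟫ := by
  set A := g q - g p + 2 * c * ⟪p - v, q - p⟫
  -- compare `p` with `p + s • (q - p)`, divide by `s`, then let `s → 0⁺`
  have hA : ∀ s : ℝ, 0 < s → s ≤ 1 → 0 ≤ A + s * (c * ‖q - p‖ ^ 2) := by
    intro s hs hs1
    have hmin : g p + c * ‖p - v‖ ^ 2 ≤ g (p + s • (q - p)) + c * ‖p + s • (q - p) - v‖ ^ 2 :=
      hp (mem_univ _)
    have hconv : g (p + s • (q - p)) ≤ (1 - s) * g p + s * g q := by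
      have := hg.2 (mem_univ p) (mem_univ q) (by linarith : (0:ℝ) ≤ 1 - s) hs.le (by ring)
      rwa [show (1 - s) • p + s • q = p + s • (q - p) by module] at this
    have hnorm : ‖p + s • (q - p) - v‖ ^ 2
        = ‖p - v‖ ^ 2 + 2 * s * ⟪p - v, q - p⟫ + s ^ 2 * ‖q - p‖ ^ 2 := by
      rw [show p + s • (q - p) - v = (p - v) + s • (q - p) by abel, norm_add_sq_real,
        real_inner_smul_right, norm_smul, mul_pow, Real.norm_eq_abs, sq_abs]
      ring
    rw [hnorm] at hmin
    refine (mul_nonneg_iff_of_pos_left hs).mp ?_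
    simp only [A]
    linarith
  have hlim : Tendsto (fun s : ℝ => A + s * (c * ‖q - p‖ ^ 2)) (𝓝[>] 0) (𝓝 A) :=
    tendsto_nhdsWithin_of_tendsto_nhds <|
      (continuous_const.add (continuous_id.mul continuous_const)).tendsto' 0 A (by simp [A])
  exact ge_of_tendsto hlim (eventually_of_mem (Ioc_mem_nhdsGT one_pos) fun s hs => hA s hs.1 hs.2)

theorem ConvexOn.norm_sub_sq_le_inner_of_isMinOn_add_mul_norm_sq {g : E → ℝ}
    (hg : ConvexOn ℝ univ g) {c : ℝ} (hc : 0 < c) {v w pv pw : E}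
    (hv : IsMinOn (fun z => g z + c * ‖z - v‖ ^ 2) univ pv)
    (hw : IsMinOn (fun z => g z + c * ‖z - w‖ ^ 2) univ pw) :
    ‖pv - pw‖ ^ 2 ≤ ⟪pv - pw, v - w⟫ := by
  have hsum : ⟪pv - v, pw - pv⟫ + ⟪pw - w, pv - pw⟫ = ⟪pv - pw, v - w⟫ - ‖pv - pw‖ ^ 2 := by
    simp only [inner_sub_left, inner_sub_right, ← real_inner_self_eq_norm_sq, real_inner_comm]
    ring
  have h := add_nonneg (hg.optimality_of_isMinOn_add_mul_norm_sq hv pw)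
    (hg.optimality_of_isMinOn_add_mul_norm_sq hw pv)
  have : 0 ≤ 2 * c * (⟪pv - pw, v - w⟫ - ‖pv - pw‖ ^ 2) := by rw [← hsum]; linarith
  linarith [(mul_nonneg_iff_of_pos_left (by positivity : 0 < 2 * c)).mp this]

theorem norm_sub_sq_le_inner_sub_of_norm_sq_le_inner {a b : E} (h : ‖a‖ ^ 2 ≤ ⟪a, b⟫) :
    ‖b - a‖ ^ 2 ≤ ⟪b - a, b⟫ := by
  rw [norm_sub_sq_real, inner_sub_left, real_inner_self_eq_norm_sq, real_inner_comm]
  linarith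

theorem ConvexOn.cocoercive_moreau_grad {g : E → ℝ} (hg : ConvexOn ℝ univ g) {μ : ℝ}
    (hμ : 0 < μ) {prox : E → E}
    (hprox : ∀ v, IsMinOn (fun z => g z + (1 / (2 * μ)) * ‖z - v‖ ^ 2) univ (prox v)) (v w : E) :
    μ * ‖(1 / μ) • (v - prox v) - (1 / μ) • (w - prox w)‖ ^ 2
      ≤ ⟪(1 / μ) • (v - prox v) - (1 / μ) • (w - prox w), v - w⟫ := by
  have hfirm := norm_sub_sq_le_inner_sub_of_norm_sq_le_inner
    (hg.norm_sub_sq_le_inner_of_isMinOn_add_mul_norm_sq (by positivity) (hprox v) (hprox w))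
  rw [← smul_sub, norm_smul, real_inner_smul_left, mul_pow, Real.norm_eq_abs, sq_abs,
    show v - prox v - (w - prox w) = v - w - (prox v - prox w) by abel]
  have : μ * ((1 / μ) ^ 2 * ‖v - w - (prox v - prox w)‖ ^ 2)
      = (1 / μ) * ‖v - w - (prox v - prox w)‖ ^ 2 := by field_simp
  rw [this]
  gcongr


theorem proxCMO_lyapunov_deriv_le {e a d u : E} {mf L μ k1 k2 k3 : ℝ} (hmf : 0 < mf) (hμ : 0 < μ)
    (hk3 : 0 < k3) (hd : mf * ‖e‖ ^ 2 ≤ ⟪d, e⟫) (hdL : ‖d‖ ≤ L * ‖e‖)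
    (hu : μ * ‖u‖ ^ 2 ≤ ⟪u, e + μ • a⟫) :
    k3 * (2 * ⟪e, -d - u⟫) + μ * (2 * ⟪a, k1 • d + k2 • a + k3 • u⟫)
      ≤ -mf * (k3 * ‖e‖ ^ 2)
        + (2 * k2 + 2 * k3 + μ * (k1 * L) ^ 2 / (k3 * mf)) * (μ * ‖a‖ ^ 2) := by
  -- `⟪e, u⟫ = ⟪u, e + μ • a⟫ - μ ⟪u, a⟫` exposes the cocoercivity term
  have hexpand : k3 * (2 * ⟪e, -d - u⟫) + μ * (2 * ⟪a, k1 • d + k2 • a + k3 • u⟫)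
      = -2 * k3 * ⟪d, e⟫ - 2 * k3 * ⟪u, e + μ • a⟫ + 4 * μ * k3 * ⟪u, a⟫
        + 2 * μ * ⟪a, k1 • d⟫ + 2 * μ * k2 * ‖a‖ ^ 2 := by
    simp only [inner_sub_right, inner_neg_right, inner_add_right, real_inner_smul_right,
      real_inner_self_eq_norm_sq, real_inner_comm e, real_inner_comm a]
    ring
  have hua : ⟪u, a⟫ ≤ ‖u‖ * ‖a‖ := real_inner_le_norm u a
  have hda : 2 * μ * ⟪a, k1 • d⟫ ≤ 2 * ‖e‖ * (μ * ‖a‖ * (|k1| * L)) := by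
    calc 2 * μ * ⟪a, k1 • d⟫ ≤ 2 * μ * (‖a‖ * (|k1| * ‖d‖)) := by
          gcongr
          simpa [norm_smul] using real_inner_le_norm a (k1 • d)
      _ ≤ 2 * μ * (‖a‖ * (|k1| * (L * ‖e‖))) := by gcongr
      _ = 2 * ‖e‖ * (μ * ‖a‖ * (|k1| * L)) := by ring
  have hsq : 2 * ‖u‖ * ‖a‖ ≤ ‖u‖ ^ 2 + ‖a‖ ^ 2 := two_mul_le_add_sq _ _
  have hyoung := two_mul_le_add_mul_sq (a := ‖e‖) (b := μ * ‖a‖ * (|k1| * L))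
    (mul_pos hk3 hmf)
  have hyoung' : (k3 * mf)⁻¹ * (μ * ‖a‖ * (|k1| * L)) ^ 2
      = μ * (k1 * L) ^ 2 / (k3 * mf) * (μ * ‖a‖ ^ 2) := by
    rw [mul_pow _ (|k1| * L), mul_pow |k1|, sq_abs, ← mul_pow]
    ring
  rw [hexpand]
  linarith [mul_le_mul_of_nonneg_left hd hk3.le, mul_le_mul_of_nonneg_left hu hk3.le,
    mul_le_mul_of_nonneg_left hua (by positivity : (0:ℝ) ≤ μ * k3),
    mul_le_mul_of_nonneg_left hsq (by positivity : (0:ℝ) ≤ μ * k3)]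

theorem proxCMO_lyapunov_le {f' G : E → E} {x α : ℝ → E} {xs αs : E} {mf L μ k1 k2 k3 r : ℝ}
    (hmf : 0 < mf) (hμ : 0 < μ) (hk3 : 0 < k3)
    (hsc : ∀ x y, mf * ‖x - y‖ ^ 2 ≤ ⟪f' x - f' y, x - y⟫)
    (hlip : ∀ x y, ‖f' x - f' y‖ ≤ L * ‖x - y‖)
    (hG : ∀ v w, μ * ‖G v - G w‖ ^ 2 ≤ ⟪G v - G w, v - w⟫)
    (hr_mf : r ≤ mf) (hr_k2 : 2 * k2 + 2 * k3 + μ * (k1 * L) ^ 2 / (k3 * mf) ≤ -r)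
    (hx : ∀ t, HasDerivAt x (-f' (x t) - G (x t + μ • α t)) t)
    (hα : ∀ t, HasDerivAt α (k1 • f' (x t) + k2 • α t + k3 • G (x t + μ • α t)) t)
    (heq1 : -f' xs - G (xs + μ • αs) = 0)
    (heq2 : k1 • f' xs + k2 • αs + k3 • G (xs + μ • αs) = 0) {t : ℝ} (ht : 0 ≤ t) :
    k3 * ‖x t - xs‖ ^ 2 + μ * ‖α t - αs‖ ^ 2
      ≤ (k3 * ‖x 0 - xs‖ ^ 2 + μ * ‖α 0 - αs‖ ^ 2) * exp (-r * t) := by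
  set d := fun t => f' (x t) - f' xs
  set u := fun t => G (x t + μ • α t) - G (xs + μ • αs)
  have hV : ∀ t, HasDerivAt (fun t => k3 * ‖x t - xs‖ ^ 2 + μ * ‖α t - αs‖ ^ 2)
      (k3 * (2 * ⟪x t - xs, -d t - u t⟫)
        + μ * (2 * ⟪α t - αs, k1 • d t + k2 • (α t - αs) + k3 • u t⟫)) t := by
    intro t
    have hx' : -d t - u t = -f' (x t) - G (x t + μ • α t) := by
      rw [← sub_zero (-f' (x t) - _), ← heq1]; simp only [d, u]; abel
    have hα' : k1 • d t + k2 • (α t - αs) + k3 • u t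
        = k1 • f' (x t) + k2 • α t + k3 • G (x t + μ • α t) := by
      rw [← sub_zero (k1 • f' (x t) + _), ← heq2]; simp only [d, u, smul_sub]; abel
    rw [hx', hα']
    exact ((((hx t).sub_const xs).norm_sq).const_mul k3).add
      ((((hα t).sub_const αs).norm_sq).const_mul μ)
  refine le_mul_exp_of_hasDerivAt_le_mul hV (fun t => ?_) ht
  have hu : μ * ‖u t‖ ^ 2 ≤ ⟪u t, (x t - xs) + μ • (α t - αs)⟫ := by
    rw [show (x t - xs) + μ • (α t - αs) = (x t + μ • α t) - (xs + μ • αs) by module]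
    exact hG _ _
  refine (proxCMO_lyapunov_deriv_le hmf hμ hk3 (hsc (x t) xs) (hlip (x t) xs) hu).trans ?_
  have := mul_le_mul_of_nonneg_left hr_mf (by positivity : 0 ≤ k3 * ‖x t - xs‖ ^ 2)
  have := mul_le_mul_of_nonneg_right hr_k2 (by positivity : 0 ≤ μ * ‖α t - αs‖ ^ 2)
  linarith

end InnerProductSpace

theorem stmt16_general {n : ℕ}
    (f' : EuclideanSpace ℝ (Fin n) → EuclideanSpace ℝ (Fin n))
    (mf Lf : ℝ) (hmf : 0 < mf)
    (hsc : ∀ x y, mf * ‖x - y‖ ^ 2 ≤ ⟪f' x - f' y, x - y⟫)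
    (hlip : LipschitzWith Lf.toNNReal f')
    (g : EuclideanSpace ℝ (Fin n) → ℝ) (μ : ℝ) (hμ : 0 < μ)
    (hg_conv : ConvexOn ℝ Set.univ g)
    (prox : EuclideanSpace ℝ (Fin n) → EuclideanSpace ℝ (Fin n))
    (hprox : ∀ v, IsMinOn (fun z => g z + (1 / (2 * μ)) * ‖z - v‖ ^ 2) Set.univ (prox v))
    (k1 k2 k3 : ℝ) (hk3 : 0 < k3)
    (hk2 : k2 < -k3 - (k1 ^ 2 * μ / (2 * k3)) * (Lf ^ 2 / mf))
    (x α : ℝ → EuclideanSpace ℝ (Fin n))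
    (hx : ∀ t, HasDerivAt x
      (-f' (x t) - (1 / μ) • ((x t + μ • α t) - prox (x t + μ • α t))) t)
    (hα : ∀ t, HasDerivAt α
      (k1 • f' (x t) + k2 • α t
        + k3 • ((1 / μ) • ((x t + μ • α t) - prox (x t + μ • α t)))) t)
    (xs αs : EuclideanSpace ℝ (Fin n))
    (heq1 : -f' xs - (1 / μ) • ((xs + μ • αs) - prox (xs + μ • αs)) = 0)
    (heq2 : k1 • f' xs + k2 • αs
        + k3 • ((1 / μ) • ((xs + μ • αs) - prox (xs + μ • αs))) = 0) :
    0 < min mf (-2 * (k2 - (-k3 - (k1 ^ 2 * μ / (2 * k3)) * (Lf ^ 2 / mf)))) ∧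
    ∃ c > 0, ∀ t ≥ (0 : ℝ),
      ‖x t - xs‖ ^ 2 + ‖α t - αs‖ ^ 2
        ≤ c * Real.exp
            (-(min mf (-2 * (k2 - (-k3 - (k1 ^ 2 * μ / (2 * k3)) * (Lf ^ 2 / mf)))) * t) / 2) := by
  set ρ := -2 * (k2 - (-k3 - (k1 ^ 2 * μ / (2 * k3)) * (Lf ^ 2 / mf)))
  set r := min mf ρ
  have hρ : 2 * k2 + 2 * k3 + μ * (k1 * Lf.toNNReal) ^ 2 / (k3 * mf) ≤ -ρ := by
    calc _ ≤ 2 * k2 + 2 * k3 + μ * (k1 * Lf) ^ 2 / (k3 * mf) := by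
          rw [mul_pow k1, mul_pow k1]
          gcongr 2 * k2 + 2 * k3 + μ * (k1 ^ 2 * ?_) / (k3 * mf)
          exact Real.coe_toNNReal_sq_le Lf
      _ = -ρ := by simp only [ρ]; field_simp; ring
  have hr : 0 < r := lt_min hmf (by linarith)
  refine ⟨hr, ?_⟩
  set V₀ := k3 * ‖x 0 - xs‖ ^ 2 + μ * ‖α 0 - αs‖ ^ 2
  have hm : 0 < min k3 μ := lt_min hk3 hμ
  refine ⟨V₀ / min k3 μ + 1, by positivity, fun t ht => ?_⟩
  have hV := proxCMO_lyapunov_le (G := fun v => (1 / μ) • (v - prox v)) hmf hμ hk3 hsc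
    hlip.norm_sub_le (hg_conv.cocoercive_moreau_grad hμ hprox) (min_le_left _ _)
    (hρ.trans (neg_le_neg (min_le_right _ _))) hx hα heq1 heq2 ht
  calc ‖x t - xs‖ ^ 2 + ‖α t - αs‖ ^ 2
      ≤ (k3 * ‖x t - xs‖ ^ 2 + μ * ‖α t - αs‖ ^ 2) / min k3 μ := by
        rw [le_div_iff₀ hm]
        nlinarith [min_le_left k3 μ, min_le_right k3 μ, sq_nonneg ‖x t - xs‖, sq_nonneg ‖α t - αs‖]
    _ ≤ V₀ / min k3 μ * exp (-r * t) := by rw [div_mul_eq_mul_div]; gcongr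
    _ ≤ (V₀ / min k3 μ + 1) * exp (-(r * t) / 2) := by
        gcongr
        · linarith
        · nlinarith [mul_nonneg hr.le ht]

/-- Global exponential stability of the unconstrained dynamic Prox-CMO dynamics. -/
theorem stmt16 {n : ℕ}
    (f : EuclideanSpace ℝ (Fin n) → ℝ)
    (f' : EuclideanSpace ℝ (Fin n) → EuclideanSpace ℝ (Fin n))
    (mf Lf : ℝ) (hmf : 0 < mf)
    (hf' : ∀ x, HasGradientAt f (f' x) x)
    (hsc : ∀ x y, mf * ‖x - y‖ ^ 2 ≤ ⟪f' x - f' y, x - y⟫)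
    (hlip : LipschitzWith Lf.toNNReal f')
    (g : EuclideanSpace ℝ (Fin n) → ℝ) (μ : ℝ) (hμ : 0 < μ)
    (hg_conv : ConvexOn ℝ Set.univ g) (hg_lsc : LowerSemicontinuous g)
    (prox : EuclideanSpace ℝ (Fin n) → EuclideanSpace ℝ (Fin n))
    (hprox : ∀ v, IsMinOn (fun z => g z + (1 / (2 * μ)) * ‖z - v‖ ^ 2) Set.univ (prox v))
    (k1 k2 k3 : ℝ) (hk1 : 0 < k1) (hk3 : 0 < k3)
    (hk2 : k2 < -k3 - (k1 ^ 2 * μ / (2 * k3)) * (Lf ^ 2 / mf))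
    (x α : ℝ → EuclideanSpace ℝ (Fin n))
    (hx : ∀ t, HasDerivAt x
      (-f' (x t) - (1 / μ) • ((x t + μ • α t) - prox (x t + μ • α t))) t)
    (hα : ∀ t, HasDerivAt α
      (k1 • f' (x t) + k2 • α t
        + k3 • ((1 / μ) • ((x t + μ • α t) - prox (x t + μ • α t)))) t)
    (xs αs : EuclideanSpace ℝ (Fin n))
    (heq1 : -f' xs - (1 / μ) • ((xs + μ • αs) - prox (xs + μ • αs)) = 0)
    (heq2 : k1 • f' xs + k2 • αs
        + k3 • ((1 / μ) • ((xs + μ • αs) - prox (xs + μ • αs))) = 0) :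
    0 < min mf (-2 * (k2 - (-k3 - (k1 ^ 2 * μ / (2 * k3)) * (Lf ^ 2 / mf)))) ∧
    ∃ c > 0, ∀ t ≥ (0 : ℝ),
      ‖x t - xs‖ ^ 2 + ‖α t - αs‖ ^ 2
        ≤ c * Real.exp
            (-(min mf (-2 * (k2 - (-k3 - (k1 ^ 2 * μ / (2 * k3)) * (Lf ^ 2 / mf)))) * t) / 2) :=
  stmt16_general f' mf Lf hmf hsc hlip g μ hμ hg_conv prox hprox k1 k2 k3 hk3 hk2 x α hx hα xs αs
    heq1 heq2
end

section
/- Fix k₁, k₃ > 0, μ > 0, 0 < m_f ≤ L_f, and define k₂^crit = −k₃ − (k₁²μ/(2k₃))(L_f²/m_f). If k₂ < k₂^crit and 0 < r ≤ min(m_f, −2(k₂−k₂^crit)), then for every symmetric B with m_f I ⪯ B ⪯ L_f I and every symmetric U with 0 ⪯ U ⪯ I, the block matrix Q' = [[(k₃/μ)T, −k₁B], [−k₁B, −2k₂I − 2k₃U − rI]] with T = B + (1/μ)U is positive semidefinite. -/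
/-!
Write `Q'` as the sum of two positive semidefinite matrices. The first,
`[[(k₃/μ) B, -k₁ B], [-k₁ B, (k₁²μ/k₃) B]]`, is a congruence of `B ⪰ 0`, since its scalar
pattern `[[k₃/μ, -k₁], [-k₁, k₁²μ/k₃]]` has determinant zero. What is left is block diagonal:
`(k₃/μ²) U ⪰ 0` in the top corner and, in the bottom one,
`c • I + 2k₃ (I - U) + (k₁²μ/k₃)(L_f I - B)` with
`c = -2k₂ - r - 2k₃ - k₁²μL_f/k₃`, which is nonnegative by the bound on `r` because
`L_f ≤ L_f²/m_f`.
-/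

open Matrix

namespace Matrix.PosSemidef

variable {m n : Type*} [Fintype m] [Fintype n]

theorem fromBlocks_diag {A : Matrix m m ℝ} {D : Matrix n n ℝ} (hA : A.PosSemidef)
    (hD : D.PosSemidef) : (fromBlocks A 0 0 D).PosSemidef := by
  refine .of_dotProduct_mulVec_nonneg (hA.isHermitian.fromBlocks (by simp) hD.isHermitian)
    fun x => ?_
  rw [fromBlocks_mulVec, dotProduct_block]
  simpa using add_nonneg (hA.dotProduct_mulVec_nonneg (x ∘ Sum.inl))
    (hD.dotProduct_mulVec_nonneg (x ∘ Sum.inr))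

theorem fromBlocks_smul_of_sq_le [DecidableEq n] {B : Matrix n n ℝ} (hB : B.PosSemidef)
    {a b c : ℝ} (ha : 0 < a) (hbc : b ^ 2 ≤ a * c) :
    (fromBlocks (a • B) (b • B) (b • B) (c • B)).PosSemidef := by
  let P : Matrix n (n ⊕ n) ℝ := fromCols (a • 1) (b • 1)
  have hsplit : fromBlocks (a • B) (b • B) (b • B) (c • B) =
      a⁻¹ • (Pᴴ * B * P) + fromBlocks 0 0 0 ((c - b ^ 2 / a) • B) := by
    rw [conjTranspose_eq_transpose_of_trivial, transpose_fromCols, Matrix.mul_assoc, mul_fromCols,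
      fromRows_mul_fromCols, Matrix.fromBlocks_smul, fromBlocks_add]
    congr 1 <;>
      simp only [transpose_smul, transpose_one, Matrix.smul_mul, Matrix.mul_smul, Matrix.one_mul,
        Matrix.mul_one, add_zero] <;>
      match_scalars
    all_goals field_simp
    ring
  rw [hsplit]
  exact ((hB.conjTranspose_mul_mul_same P).smul (inv_nonneg.2 ha.le)).add
    (PosSemidef.zero.fromBlocks_diag (hB.smul (sub_nonneg.2 ((div_le_iff₀' ha).2 hbc))))

end Matrix.PosSemidef

theorem stmt17_general {n : ℕ} (k1 k2 k3 μ mf Lf r : ℝ)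
    (hk3 : 0 < k3) (hμ : 0 < μ) (hmf : 0 < mf) (hmL : mf ≤ Lf)
    (hr : r ≤ min mf (-2 * (k2 - (-k3 - (k1 ^ 2 * μ / (2 * k3)) * (Lf ^ 2 / mf)))))
    (B U : Matrix (Fin n) (Fin n) ℝ)
    (hBm : (B - mf • (1 : Matrix (Fin n) (Fin n) ℝ)).PosSemidef)
    (hBL : (Lf • (1 : Matrix (Fin n) (Fin n) ℝ) - B).PosSemidef)
    (hU0 : U.PosSemidef)
    (hU1 : ((1 : Matrix (Fin n) (Fin n) ℝ) - U).PosSemidef) :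
    (Matrix.fromBlocks
        ((k3 / μ) • (B + (1 / μ) • U))
        (-(k1 • B))
        (-(k1 • B))
        ((-2 * k2) • (1 : Matrix (Fin n) (Fin n) ℝ) - (2 * k3) • U
          - r • (1 : Matrix (Fin n) (Fin n) ℝ))).PosSemidef := by
  have hc : 0 ≤ -2 * k2 - r - 2 * k3 - k1 ^ 2 * μ / k3 * Lf := by
    have hLf : Lf ≤ Lf ^ 2 / mf := by rw [le_div_iff₀ hmf]; nlinarith
    have hscaled := mul_le_mul_of_nonneg_left hLf (by positivity : 0 ≤ k1 ^ 2 * μ / k3)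
    have hhalf : k1 ^ 2 * μ / (2 * k3) * (Lf ^ 2 / mf) = k1 ^ 2 * μ / k3 * (Lf ^ 2 / mf) / 2 := by
      ring
    linarith [hr.trans (min_le_right _ _)]
  set c := -2 * k2 - r - 2 * k3 - k1 ^ 2 * μ / k3 * Lf
  have hB : B.PosSemidef := by simpa using hBm.add (PosSemidef.one.smul hmf.le)
  have hsplit : fromBlocks ((k3 / μ) • (B + (1 / μ) • U)) (-(k1 • B)) (-(k1 • B))
        ((-2 * k2) • 1 - (2 * k3) • U - r • 1) =
      fromBlocks ((k3 / μ) • B) ((-k1) • B) ((-k1) • B) ((k1 ^ 2 * μ / k3) • B) +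
        fromBlocks ((k3 / μ ^ 2) • U) 0 0
          (c • 1 + (2 * k3) • (1 - U) + (k1 ^ 2 * μ / k3) • (Lf • 1 - B)) := by
    rw [fromBlocks_add]
    congr 1 <;> module
  have hcorner :
      (c • 1 + (2 * k3) • (1 - U) + (k1 ^ 2 * μ / k3) • (Lf • 1 - B)).PosSemidef :=
    ((PosSemidef.one.smul hc).add (hU1.smul (by positivity))).add (hBL.smul (by positivity))
  rw [hsplit]
  exact (hB.fromBlocks_smul_of_sq_le (by positivity) (le_of_eq (by field_simp))).add
    ((hU0.smul (by positivity)).fromBlocks_diag hcorner)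

/-- Positive semidefiniteness of the block matrix `Q'` in the Lyapunov analysis of
the unconstrained dynamic Prox-CMO. -/
theorem stmt17 {n : ℕ} (k1 k2 k3 μ mf Lf r : ℝ)
    (hk1 : 0 < k1) (hk3 : 0 < k3) (hμ : 0 < μ) (hmf : 0 < mf) (hmL : mf ≤ Lf)
    (hk2 : k2 < -k3 - (k1 ^ 2 * μ / (2 * k3)) * (Lf ^ 2 / mf))
    (hr0 : 0 < r)
    (hr : r ≤ min mf (-2 * (k2 - (-k3 - (k1 ^ 2 * μ / (2 * k3)) * (Lf ^ 2 / mf)))))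
    (B U : Matrix (Fin n) (Fin n) ℝ) (hBsymm : B.IsSymm) (hUsymm : U.IsSymm)
    (hBm : (B - mf • (1 : Matrix (Fin n) (Fin n) ℝ)).PosSemidef)
    (hBL : (Lf • (1 : Matrix (Fin n) (Fin n) ℝ) - B).PosSemidef)
    (hU0 : U.PosSemidef)
    (hU1 : ((1 : Matrix (Fin n) (Fin n) ℝ) - U).PosSemidef) :
    (Matrix.fromBlocks
        ((k3 / μ) • (B + (1 / μ) • U))
        (-(k1 • B))
        (-(k1 • B))
        ((-2 * k2) • (1 : Matrix (Fin n) (Fin n) ℝ) - (2 * k3) • U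
          - r • (1 : Matrix (Fin n) (Fin n) ℝ))).PosSemidef :=
  stmt17_general k1 k2 k3 μ mf Lf r hk3 hμ hmf hmL hr B U hBm hBL hU0 hU1
end
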